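/- Suppose a⁰_{n,m} = 0, a¹_{n,m} = 1, b⁰_{n,m} = 0, and b¹_{n,m} = 4·(m mod p₂) for all (n,m) ∈ ℤ², where m mod p₂ ∈ {0,1,…,p₂−1} (so every Aₙ is the identity operator and every Bₙ = diag(4m mod 4p₂)_{m∈ℤ}). Then the Lebesgue measure of the spectrum of the 2D periodic Jacobi operator 𝒥 equals 4p₂: mes(σ(𝒥)) = 4p₂, so the estimate mes(σ(𝒥)) ≤ 4 min_β Σ_{n=1}^{p₁}|b⁰_{n,β}| + 4 min_α Σ_{m=1}^{p₂}|a¹_{α,m}| = 4p₂ is attained with equality. -/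

import Mathlib

/-!
On every horizontal line `m = const` the operator acts as the free discrete Laplacian in `n`,
shifted by `4 (m mod p₂)`; so its spectrum is the union of the bands `[4r - 2, 4r + 2]`,
`0 ≤ r < p₂`, which tile `[-2, 4p₂ - 2]`. The inclusion `⊆` follows from the norm bound
`‖𝒥 - (2p₂ - 2)‖ ≤ 2p₂` (two shifts plus a bounded multiplier). The inclusion `⊇` comes from
Weyl sequences: a plane wave `e^{iθn}` on one line, truncated to `|n| ≤ N`, has norm
`√(2N + 1)` while its residual is supported on four boundary sites and has norm at most `4`.
-/

open scoped ComplexConjugate Matrix ENNReal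

noncomputable section

/-- `ℓ²(ℤ)`, the Hilbert space of square-summable complex sequences indexed by `ℤ`. -/
abbrev H1 : Type := lp (fun _ : ℤ => ℂ) 2

/-- `ℓ²(ℤ²)`, the Hilbert space of square-summable complex sequences indexed by `ℤ × ℤ`. -/
abbrev H2 : Type := lp (fun _ : ℤ × ℤ => ℂ) 2

/-- `x` is doubly periodic with period `p₁` in the first index and `p₂` in the second index. -/
def Periodic2 {α : Type*} (p₁ p₂ : ℕ) (x : ℤ → ℤ → α) : Prop :=
  ∀ n m : ℤ, x (n + (p₁ : ℤ)) m = x n m ∧ x n (m + (p₂ : ℤ)) = x n m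

/-- `J` acts as the 2D periodic Jacobi operator `(𝒥 f)ₙ = Aₙ f_{n+1} + Bₙ fₙ + A*_{n−1} f_{n−1}`
on `ℓ²(ℤ²) = ℓ²(ℤ; ℓ²(ℤ))`, written out entrywise, where `Aₙ = S·A⁰ₙ + A¹ₙ + (S·A⁰ₙ)*` and
`Bₙ = S·B⁰ₙ + B¹ₙ + (S·B⁰ₙ)*` with `A⁰ₙ = diag(a⁰ₙₘ)`, `A¹ₙ = diag(a¹ₙₘ)`,
`B⁰ₙ = diag(b⁰ₙₘ)`, `B¹ₙ = diag(b¹ₙₘ)` and `S` the shift `(Sz)ₘ = z_{m−1}`. -/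
def IsJacobi2D (a0 a1 b0 : ℤ → ℤ → ℂ) (b1 : ℤ → ℤ → ℝ) (J : H2 →L[ℂ] H2) : Prop :=
  ∀ (f : H2) (n m : ℤ),
    (J f) (n, m) =
      a0 n (m - 1) * f (n + 1, m - 1) + a1 n m * f (n + 1, m) +
        conj (a0 n m) * f (n + 1, m + 1) +
      b0 n (m - 1) * f (n, m - 1) + (b1 n m : ℂ) * f (n, m) + conj (b0 n m) * f (n, m + 1) +
      a0 (n - 1) (m - 1) * f (n - 1, m - 1) + conj (a1 (n - 1) m) * f (n - 1, m) +
        conj (a0 (n - 1) m) * f (n - 1, m + 1)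

/-- `A` acts on `ℓ²(ℤ)` as the 1D periodic Jacobi matrix `S·diag(c0) + diag(c1) + (S·diag(c0))*`,
i.e. `(A z)ₘ = c0_{m−1} z_{m−1} + c1ₘ zₘ + conj(c0ₘ) z_{m+1}`. -/
def IsJacobi1D (c0 c1 : ℤ → ℂ) (A : H1 →L[ℂ] H1) : Prop :=
  ∀ (z : H1) (m : ℤ),
    (A z) m = c0 (m - 1) * z (m - 1) + c1 m * z m + conj (c0 m) * z (m + 1)

/-- The `p × p` Floquet Jacobi matrix `Âₙ(x)` (resp. `B̂ₙ(x)`) built from the off-diagonal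
sequence `c0` and the diagonal sequence `c1`; the index `i : Fin p` corresponds to the
1-based index `m = i + 1`.  The entries are: diagonal `c1_m`, subdiagonal `(m+1,m) = c0_m`,
superdiagonal `(m,m+1) = conj(c0_m)`, corners `(1,p) = e^{ix} c0_p`,
`(p,1) = e^{−ix} conj(c0_p)`. -/
def floquetMat (p : ℕ) (c0 c1 : ℤ → ℂ) (x : ℝ) : Matrix (Fin p) (Fin p) ℂ :=
  fun i j =>
    (if (i : ℕ) = (j : ℕ) + 1 then c0 (((j : ℕ) : ℤ) + 1) else 0) +
    (if (i : ℕ) = (j : ℕ) then c1 (((i : ℕ) : ℤ) + 1) else 0) +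
    (if (j : ℕ) = (i : ℕ) + 1 then conj (c0 (((i : ℕ) : ℤ) + 1)) else 0) +
    (if (i : ℕ) = 0 ∧ (j : ℕ) = p - 1 then Complex.exp (Complex.I * x) * c0 (p : ℤ) else 0) +
    (if (j : ℕ) = 0 ∧ (i : ℕ) = p - 1 then
      Complex.exp (-(Complex.I * x)) * conj (c0 (p : ℤ)) else 0)

/-- The matrix `Â⁰ₙ` (resp. `B̂⁰ₙ`): the Floquet matrix with corner entries replaced by `0`
(independent of `x`). -/
def floquetMat0 (p : ℕ) (c0 c1 : ℤ → ℂ) : Matrix (Fin p) (Fin p) ℂ :=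
  fun i j =>
    (if (i : ℕ) = (j : ℕ) + 1 then c0 (((j : ℕ) : ℤ) + 1) else 0) +
    (if (i : ℕ) = (j : ℕ) then c1 (((i : ℕ) : ℤ) + 1) else 0) +
    (if (j : ℕ) = (i : ℕ) + 1 then conj (c0 (((i : ℕ) : ℤ) + 1)) else 0)

/-- The `p₁p₂ × p₁p₂` Floquet block matrix `J(x,y)`: diagonal blocks `B̂ₙ(x)`,
block subdiagonal `Âₙ(x)`, block superdiagonal `Âₙ(x)*`, corner blocks `e^{iy} Â_{p₁}(x)`
(top right) and `e^{−iy} Â_{p₁}(x)*` (bottom left).  The block index `q.1 : Fin p₁`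
corresponds to the 1-based index `n = q.1 + 1`. -/
def JMat (p₁ p₂ : ℕ) (a0 a1 b0 : ℤ → ℤ → ℂ) (b1 : ℤ → ℤ → ℝ) (x y : ℝ) :
    Matrix (Fin p₁ × Fin p₂) (Fin p₁ × Fin p₂) ℂ :=
  fun q r =>
    (if (q.1 : ℕ) = (r.1 : ℕ) then
        floquetMat p₂ (b0 (((q.1 : ℕ) : ℤ) + 1)) (fun m => (b1 (((q.1 : ℕ) : ℤ) + 1) m : ℂ)) x
          q.2 r.2
      else 0) +
    (if (q.1 : ℕ) = (r.1 : ℕ) + 1 then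
        floquetMat p₂ (a0 (((r.1 : ℕ) : ℤ) + 1)) (a1 (((r.1 : ℕ) : ℤ) + 1)) x q.2 r.2
      else 0) +
    (if (r.1 : ℕ) = (q.1 : ℕ) + 1 then
        (floquetMat p₂ (a0 (((q.1 : ℕ) : ℤ) + 1)) (a1 (((q.1 : ℕ) : ℤ) + 1)) x)ᴴ q.2 r.2
      else 0) +
    (if (q.1 : ℕ) = 0 ∧ (r.1 : ℕ) = p₁ - 1 then
        Complex.exp (Complex.I * y) * floquetMat p₂ (a0 (p₁ : ℤ)) (a1 (p₁ : ℤ)) x q.2 r.2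
      else 0) +
    (if (r.1 : ℕ) = 0 ∧ (q.1 : ℕ) = p₁ - 1 then
        Complex.exp (-(Complex.I * y)) * (floquetMat p₂ (a0 (p₁ : ℤ)) (a1 (p₁ : ℤ)) x)ᴴ q.2 r.2
      else 0)

/-- The block-tridiagonal matrix `J₀`: diagonal blocks `B̂⁰ₙ`, block subdiagonal `Â⁰ₙ`,
block superdiagonal `(Â⁰ₙ)*`, zero corner blocks. -/
def J0Mat (p₁ p₂ : ℕ) (a0 a1 b0 : ℤ → ℤ → ℂ) (b1 : ℤ → ℤ → ℝ) :
    Matrix (Fin p₁ × Fin p₂) (Fin p₁ × Fin p₂) ℂ :=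
  fun q r =>
    (if (q.1 : ℕ) = (r.1 : ℕ) then
        floquetMat0 p₂ (b0 (((q.1 : ℕ) : ℤ) + 1)) (fun m => (b1 (((q.1 : ℕ) : ℤ) + 1) m : ℂ))
          q.2 r.2
      else 0) +
    (if (q.1 : ℕ) = (r.1 : ℕ) + 1 then
        floquetMat0 p₂ (a0 (((r.1 : ℕ) : ℤ) + 1)) (a1 (((r.1 : ℕ) : ℤ) + 1)) q.2 r.2
      else 0) +
    (if (r.1 : ℕ) = (q.1 : ℕ) + 1 then
        (floquetMat0 p₂ (a0 (((q.1 : ℕ) : ℤ) + 1)) (a1 (((q.1 : ℕ) : ℤ) + 1)))ᴴ q.2 r.2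
      else 0)

/-- The diagonal entries `d₁,…,d_{p₂}` of the matrix `D`:
`d_m = |a¹_{p₁,m}| + |a⁰_{p₁,m}| + |a⁰_{p₁,m−1}|`, where `a⁰_{p₁,0} := a⁰_{p₁,p₂}`. -/
def dVec (p₁ p₂ : ℕ) (a0 a1 : ℤ → ℤ → ℂ) (j : Fin p₂) : ℝ :=
  ‖a1 (p₁ : ℤ) (((j : ℕ) : ℤ) + 1)‖ +
  ‖a0 (p₁ : ℤ) (((j : ℕ) : ℤ) + 1)‖ +
  ‖a0 (p₁ : ℤ) (if (j : ℕ) = 0 then (p₂ : ℤ) else ((j : ℕ) : ℤ))‖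

/-- The (real) diagonal entries of the diagonal matrix `C = diag(C₁,…,C_{p₁})`, where
`Cₙ = diag(cₙ,0,…,0,cₙ)` with `cₙ = |b⁰_{n,p₂}| + |a⁰_{n,p₂}| + |a⁰_{n−1,p₂}|` for
`2 ≤ n ≤ p₁−1`, `C₁ = diag(c₁⁰,0,…,0,c₁⁰) + D` with `c₁⁰ = |b⁰_{1,p₂}| + |a⁰_{1,p₂}|`, and
`C_{p₁} = diag(c⁰,0,…,0,c⁰) + D` with `c⁰ = |b⁰_{p₁,p₂}| + |a⁰_{p₁−1,p₂}|`. -/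
def CDiag (p₁ p₂ : ℕ) (a0 a1 b0 : ℤ → ℤ → ℂ) (q : Fin p₁ × Fin p₂) : ℝ :=
  (if (q.2 : ℕ) = 0 ∨ (q.2 : ℕ) = p₂ - 1 then
      (if (q.1 : ℕ) = 0 then ‖b0 1 (p₂ : ℤ)‖ + ‖a0 1 (p₂ : ℤ)‖
       else if (q.1 : ℕ) = p₁ - 1 then
         ‖b0 (p₁ : ℤ) (p₂ : ℤ)‖ + ‖a0 ((p₁ : ℤ) - 1) (p₂ : ℤ)‖
       else
         ‖b0 (((q.1 : ℕ) : ℤ) + 1) (p₂ : ℤ)‖ +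
         ‖a0 (((q.1 : ℕ) : ℤ) + 1) (p₂ : ℤ)‖ +
         ‖a0 ((q.1 : ℕ) : ℤ) (p₂ : ℤ)‖)
    else 0) +
  (if (q.1 : ℕ) = 0 ∨ (q.1 : ℕ) = p₁ - 1 then dVec p₁ p₂ a0 a1 q.2 else 0)

/-- The diagonal matrix `C`. -/
def CMat (p₁ p₂ : ℕ) (a0 a1 b0 : ℤ → ℤ → ℂ) :
    Matrix (Fin p₁ × Fin p₂) (Fin p₁ × Fin p₂) ℂ :=
  Matrix.diagonal (fun q => (CDiag p₁ p₂ a0 a1 b0 q : ℂ))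

/-- `lam` is the nondecreasing enumeration (with multiplicities) of the eigenvalues of
the Hermitian matrix `M`. -/
def IsOrderedEigs {N : Type*} [Fintype N] [DecidableEq N] (M : Matrix N N ℂ) {k : ℕ}
    (lam : Fin k → ℝ) : Prop :=
  Monotone lam ∧ ∃ (hM : M.IsHermitian) (e : Fin k ≃ N), ∀ i, lam i = hM.eigenvalues (e i)

open Filter

section lpOperations

variable {α β E 𝕜 : Type*} [NormedAddCommGroup E] {p : ℝ≥0∞}

theorem Memℓp.comp_equiv {f : β → E} (hf : Memℓp f p) (e : α ≃ β) : Memℓp (f ∘ e) p := by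
  obtain rfl | rfl | hp := p.trichotomy
  · exact memℓp_zero (hf.finite_dsupport.preimage e.injective.injOn)
  · refine memℓp_infty ?_
    rw [show (fun i => ‖(f ∘ e) i‖) = (fun j => ‖f j‖) ∘ e from rfl, e.surjective.range_comp]
    exact hf.bddAbove
  · exact (memℓp_gen_iff hp).2 (e.summable_iff.2 ((memℓp_gen_iff hp).1 hf))

theorem Memℓp.infty_smul [NormedRing 𝕜] [Module 𝕜 E] [IsBoundedSMul 𝕜 E] {w : α → 𝕜}
    {f : α → E} (hw : Memℓp w ∞) (hf : Memℓp f p) : Memℓp (fun i => w i • f i) p := by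
  obtain ⟨C, hC⟩ := hw.bddAbove
  refine (hf.norm.const_mul C).mono fun i => (norm_smul_le _ _).trans ?_
  exact mul_le_mul_of_nonneg_right (hC ⟨i, rfl⟩) (norm_nonneg _)

namespace lp

def compEquiv (e : α ≃ β) (f : lp (fun _ : β => E) p) : lp (fun _ : α => E) p :=
  ⟨f ∘ e, (lp.memℓp f).comp_equiv e⟩

theorem norm_compEquiv (hp : 0 < p.toReal) (e : α ≃ β) (f : lp (fun _ : β => E) p) :
    ‖compEquiv e f‖ = ‖f‖ := by
  rw [norm_eq_tsum_rpow hp, norm_eq_tsum_rpow hp]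
  exact congrArg (· ^ (1 / p.toReal)) (e.tsum_eq fun i => ‖f i‖ ^ p.toReal)

variable [NormedRing 𝕜] [Module 𝕜 E] [IsBoundedSMul 𝕜 E]

def inftySMul (w : lp (fun _ : α => 𝕜) ∞) (f : lp (fun _ : α => E) p) : lp (fun _ : α => E) p :=
  ⟨fun i => w i • f i, (lp.memℓp w).infty_smul (lp.memℓp f)⟩

theorem norm_inftySMul_le [NormedSpace ℝ E] (hp : p ≠ 0) (w : lp (fun _ : α => 𝕜) ∞)
    (f : lp (fun _ : α => E) p) : ‖inftySMul w f‖ ≤ ‖w‖ * ‖f‖ :=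
  calc ‖inftySMul w f‖ ≤ ‖‖w‖ • f‖ := lp.norm_mono hp fun i => by
        rw [lp.coeFn_smul, Pi.smul_apply, norm_smul, Real.norm_of_nonneg (norm_nonneg _)]
        exact (norm_smul_le _ _).trans
          (by gcongr; exact lp.norm_apply_le_norm ENNReal.top_ne_zero w i)
    _ = ‖w‖ * ‖f‖ := by rw [lp.norm_const_smul hp, Real.norm_of_nonneg (norm_nonneg _)]

end lp

end lpOperations

section Spectrum

variable {𝕜 E : Type*} [NontriviallyNormedField 𝕜] [NormedAddCommGroup E] [NormedSpace 𝕜 E]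

namespace ContinuousLinearMap

theorem norm_sub_le_of_mem_spectrum [CompleteSpace E] {T : E →L[𝕜] E} {c k : 𝕜}
    (hk : k ∈ spectrum 𝕜 T) : ‖k - c‖ ≤ ‖T - algebraMap 𝕜 _ c‖ := by
  have hmem : k - c ∈ spectrum 𝕜 (T - algebraMap 𝕜 _ c) := by
    rw [← spectrum.sub_singleton_eq]
    exact Set.sub_mem_sub hk rfl
  calc ‖k - c‖ ≤ ‖T - algebraMap 𝕜 _ c‖ * ‖(1 : E →L[𝕜] E)‖ :=
        spectrum.norm_le_norm_mul_of_mem hmem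
    _ ≤ ‖T - algebraMap 𝕜 _ c‖ := mul_le_of_le_one_right (norm_nonneg _) norm_id_le

theorem mem_spectrum_of_tendsto_norm_atTop {T : E →L[𝕜] E} {c : 𝕜} {f : ℕ → E} {K : ℝ}
    (hres : ∀ N, ‖(T - algebraMap 𝕜 _ c) (f N)‖ ≤ K)
    (hf : Tendsto (fun N => ‖f N‖) atTop atTop) : c ∈ spectrum 𝕜 T := by
  rw [spectrum.mem_iff]
  rintro ⟨u, hu⟩
  set R : E →L[𝕜] E := ↑u⁻¹
  obtain ⟨N, hN⟩ := (hf.eventually_gt_atTop (‖R‖ * K)).exists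
  have hinv : f N = R ((algebraMap 𝕜 _ c - T) (f N)) := by
    rw [← hu]
    exact (DFunLike.congr_fun u.inv_mul (f N)).symm
  have : ‖f N‖ ≤ ‖R‖ * K := by
    rw [hinv]
    refine (R.le_opNorm _).trans ?_
    rw [← neg_sub, neg_apply, norm_neg]
    exact mul_le_mul_of_nonneg_left (hres N) (norm_nonneg _)
  linarith

end ContinuousLinearMap

end Spectrum

theorem exists_norm_eq_one_add_eq_mul {x : ℝ} (hx : |x| ≤ 2) :
    ∃ φ : ℤ → ℂ, (∀ n, ‖φ n‖ = 1) ∧ ∀ n, φ (n + 1) + φ (n - 1) = x * φ n := by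
  set θ := Real.arccos (x / 2)
  obtain ⟨hx₁, hx₂⟩ := abs_le.1 hx
  have hcos : (x : ℂ) = 2 * Complex.cos θ := by
    rw [← Complex.ofReal_cos, Real.cos_arccos (by linarith) (by linarith)]
    push_cast
    ring
  refine ⟨fun n => Complex.exp ((n * θ : ℝ) * Complex.I), fun n => ?_, fun n => ?_⟩
  · exact Complex.norm_exp_ofReal_mul_I _
  · dsimp only
    push_cast
    rw [hcos, Complex.two_cos,
      show ((n : ℂ) + 1) * θ * Complex.I = n * θ * Complex.I + θ * Complex.I by ring,
      show ((n : ℂ) - 1) * θ * Complex.I = n * θ * Complex.I + -θ * Complex.I by ring,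
      Complex.exp_add, Complex.exp_add]
    ring

theorem indicator_Icc_add_add_sub_mul {φ : ℤ → ℂ} {c : ℂ}
    (hφ : ∀ n, φ (n + 1) + φ (n - 1) = c * φ n) (N : ℕ) (n : ℤ) :
    (Set.Icc (-N : ℤ) N).indicator φ (n + 1) + (Set.Icc (-N : ℤ) N).indicator φ (n - 1)
        - c * (Set.Icc (-N : ℤ) N).indicator φ n =
      (if n = -N - 1 then φ (-N) else 0) - (if n = -N then φ (-N - 1) else 0)
        - (if n = N then φ (N + 1) else 0) + (if n = N + 1 then φ N else 0) := by
  have h := hφ n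
  simp only [Set.indicator_apply, Set.mem_Icc]
  rcases N.eq_zero_or_pos with rfl | hN <;> split_ifs <;>
    first | omega | (subst_vars; first | (ring_nf; done) | linear_combination (norm := ring_nf) h)

theorem exists_lt_abs_sub_le {p : ℕ} (hp : 0 < p) {t : ℝ}
    (ht : t ∈ Set.Icc (-2 : ℝ) (4 * p - 2)) :
    ∃ r : ℕ, r < p ∧ |t - 4 * r| ≤ 2 := by
  obtain ⟨ht₁, ht₂⟩ := ht
  set k := ⌊(t + 2) / 4⌋₊
  have hk₁ : (k : ℝ) ≤ (t + 2) / 4 := Nat.floor_le (by linarith)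
  have hk₂ : (t + 2) / 4 < k + 1 := Nat.lt_floor_add_one _
  rcases lt_or_ge k p with hkp | hkp
  · exact ⟨k, hkp, abs_le.2 ⟨by linarith, by linarith⟩⟩
  · refine ⟨p - 1, by omega, abs_le.2 ?_⟩
    have : (p : ℝ) ≤ k := by exact_mod_cast hkp
    rw [Nat.cast_sub hp, Nat.cast_one]
    constructor <;> linarith

def IsLayeredLaplacian (v : ℤ → ℝ) (T : H2 →L[ℂ] H2) : Prop :=
  ∀ (f : H2) (n m : ℤ), T f (n, m) = f (n + 1, m) + f (n - 1, m) + v m * f (n, m)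

theorem IsJacobi2D.isLayeredLaplacian {a0 a1 b0 : ℤ → ℤ → ℂ} {b1 : ℤ → ℤ → ℝ} {v : ℤ → ℝ}
    {T : H2 →L[ℂ] H2} (hT : IsJacobi2D a0 a1 b0 b1 T) (ha0 : ∀ n m, a0 n m = 0)
    (ha1 : ∀ n m, a1 n m = 1) (hb0 : ∀ n m, b0 n m = 0) (hb1 : ∀ n m, b1 n m = v m) :
    IsLayeredLaplacian v T := by
  intro f n m
  rw [hT f n m]
  simp only [ha0, ha1, hb0, hb1, map_zero, map_one, zero_mul, one_mul, add_zero, zero_add]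
  ring

def truncatedWave (φ : ℤ → ℂ) (r : ℤ) (N : ℕ) : H2 :=
  ∑ q ∈ Finset.Icc (-N : ℤ) N ×ˢ {r}, lp.single 2 q (φ q.1)

theorem truncatedWave_apply (φ : ℤ → ℂ) (r : ℤ) (N : ℕ) (n m : ℤ) :
    truncatedWave φ r N (n, m) = if m = r then (Set.Icc (-N : ℤ) N).indicator φ n else 0 := by
  rw [truncatedWave, lp.coeFn_sum, Finset.sum_apply]
  simp only [lp.single_apply, Pi.single_apply, Set.indicator_apply, Finset.product_singleton,
    Finset.sum_ite_eq, Finset.mem_map, Finset.mem_Icc, Function.Embedding.coeFn_mk,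
    Prod.mk.injEq, existsAndEq, true_and, Set.mem_Icc]
  split_ifs <;> grind

theorem norm_truncatedWave {φ : ℤ → ℂ} (hφ : ∀ n, ‖φ n‖ = 1) (r : ℤ) (N : ℕ) :
    ‖truncatedWave φ r N‖ = √(2 * N + 1) := by
  have h := lp.norm_sum_single (p := 2) (by norm_num) (fun q : ℤ × ℤ => φ q.1)
    (Finset.Icc (-N : ℤ) N ×ˢ {r})
  simp only [hφ, ENNReal.toReal_ofNat, Real.one_rpow, Finset.sum_const, Finset.card_product,
    Int.card_Icc, Finset.card_singleton] at h
  rw [← truncatedWave, Real.rpow_two] at h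
  rw [← Real.sqrt_sq (norm_nonneg _), h, show ((N : ℤ) + 1 - -N).toNat = 2 * N + 1 by omega]
  ring_nf

namespace IsLayeredLaplacian

variable {v : ℤ → ℝ} {T : H2 →L[ℂ] H2}

theorem sub_algebraMap_apply (hT : IsLayeredLaplacian v T) (c : ℝ) (f : H2) (n m : ℤ) :
    (T - algebraMap ℂ _ (c : ℂ)) f (n, m) =
      f (n + 1, m) + f (n - 1, m) + ((v m - c : ℝ) : ℂ) * f (n, m) := by
  rw [sub_apply, lp.coeFn_sub, Pi.sub_apply, Algebra.algebraMap_eq_smul_one,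
    smul_apply, one_apply_eq_self, lp.coeFn_smul, Pi.smul_apply,
    smul_eq_mul, hT f n m]
  push_cast
  ring

theorem norm_sub_algebraMap_le (hT : IsLayeredLaplacian v T) {c R : ℝ}
    (hv : ∀ m, |v m - c| ≤ R) : ‖T - algebraMap ℂ _ (c : ℂ)‖ ≤ 2 + R := by
  have hR : 0 ≤ R := (abs_nonneg _).trans (hv 0)
  have hw : ∀ q : ℤ × ℤ, ‖((v q.2 - c : ℝ) : ℂ)‖ ≤ R := fun q => by
    rw [Complex.norm_real, Real.norm_eq_abs]
    exact hv q.2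
  let w : lp (fun _ : ℤ × ℤ => ℂ) ∞ :=
    ⟨fun q => ((v q.2 - c : ℝ) : ℂ), memℓp_infty ⟨R, by rintro _ ⟨q, rfl⟩; exact hw q⟩⟩
  have hwR : ‖w‖ ≤ R := lp.norm_le_of_forall_le hR hw
  let eNext : ℤ × ℤ ≃ ℤ × ℤ := (Equiv.addRight 1).prodCongr (Equiv.refl ℤ)
  let ePrev : ℤ × ℤ ≃ ℤ × ℤ := (Equiv.subRight 1).prodCongr (Equiv.refl ℤ)
  refine ContinuousLinearMap.opNorm_le_bound _ (by positivity) fun f => ?_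
  have hdecomp : (T - algebraMap ℂ _ (c : ℂ)) f =
      lp.compEquiv eNext f + lp.compEquiv ePrev f + lp.inftySMul w f := by
    ext ⟨n, m⟩
    rw [hT.sub_algebraMap_apply]
    rfl
  have htwo : (0 : ℝ) < (2 : ℝ≥0∞).toReal := by norm_num
  calc ‖(T - algebraMap ℂ _ (c : ℂ)) f‖
      ≤ ‖lp.compEquiv eNext f‖ + ‖lp.compEquiv ePrev f‖ + ‖lp.inftySMul w f‖ := by
        rw [hdecomp]; exact norm_add₃_le
    _ ≤ ‖f‖ + ‖f‖ + R * ‖f‖ := by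
        rw [lp.norm_compEquiv htwo, lp.norm_compEquiv htwo]
        gcongr
        exact (lp.norm_inftySMul_le two_ne_zero w f).trans (by gcongr)
    _ = (2 + R) * ‖f‖ := by ring

theorem spectrum_subset_Icc (hT : IsLayeredLaplacian v T) {a b : ℝ}
    (hv : ∀ m, v m ∈ Set.Icc a b) {t : ℝ} (ht : (t : ℂ) ∈ spectrum ℂ T) :
    t ∈ Set.Icc (a - 2) (b + 2) := by
  have h := (ContinuousLinearMap.norm_sub_le_of_mem_spectrum ht).trans
    (hT.norm_sub_algebraMap_le (c := (a + b) / 2) (R := (b - a) / 2) fun m => by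
      rw [abs_le]; constructor <;> linarith [(hv m).1, (hv m).2])
  rw [← Complex.ofReal_sub, Complex.norm_real, Real.norm_eq_abs, abs_le] at h
  constructor <;> linarith [h.1, h.2]

theorem sub_algebraMap_truncatedWave (hT : IsLayeredLaplacian v T) {φ : ℤ → ℂ} {x : ℝ}
    (hφ : ∀ n, φ (n + 1) + φ (n - 1) = x * φ n) (r : ℤ) (N : ℕ) :
    (T - algebraMap ℂ _ ((v r + x : ℝ) : ℂ)) (truncatedWave φ r N) =
      lp.single 2 (-(N : ℤ) - 1, r) (φ (-N)) - lp.single 2 (-(N : ℤ), r) (φ (-N - 1))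
        - lp.single 2 ((N : ℤ), r) (φ (N + 1)) + lp.single 2 ((N : ℤ) + 1, r) (φ N) := by
  ext ⟨n, m⟩
  rw [hT.sub_algebraMap_apply]
  simp only [truncatedWave_apply, lp.coeFn_add, lp.coeFn_sub, Pi.add_apply, Pi.sub_apply,
    lp.single_apply, Pi.single_apply, Prod.mk.injEq]
  by_cases hm : m = r
  · subst hm
    simp only [and_true, if_true]
    rw [← indicator_Icc_add_add_sub_mul hφ N n]
    push_cast
    ring
  · simp [hm]

theorem mem_spectrum (hT : IsLayeredLaplacian v T) (r : ℤ) {x : ℝ} (hx : |x| ≤ 2) :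
    ((v r + x : ℝ) : ℂ) ∈ spectrum ℂ T := by
  obtain ⟨φ, hnorm, hφ⟩ := exists_norm_eq_one_add_eq_mul hx
  refine ContinuousLinearMap.mem_spectrum_of_tendsto_norm_atTop (f := truncatedWave φ r)
    (K := 4) (fun N => ?_) ?_
  · rw [hT.sub_algebraMap_truncatedWave hφ]
    have h1 : ∀ q : ℤ × ℤ, ∀ n, ‖(lp.single 2 q (φ n) : H2)‖ = 1 := fun q n => by
      rw [lp.norm_single (by norm_num), hnorm]
    have h4 (a b c d : H2) : ‖a - b - c + d‖ ≤ ‖a‖ + ‖b‖ + ‖c‖ + ‖d‖ := by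
      linarith [norm_add_le (a - b - c) d, norm_sub_le (a - b) c, norm_sub_le a b]
    refine (h4 _ _ _ _).trans ?_
    simp only [h1]
    norm_num
  · simp only [norm_truncatedWave hnorm]
    exact Real.tendsto_sqrt_atTop.comp (tendsto_atTop_add_const_right _ _
      (tendsto_natCast_atTop_atTop.const_mul_atTop two_pos))

theorem real_spectrum_eq_Icc {p : ℕ} (hp : 0 < p)
    (hT : IsLayeredLaplacian (fun m => 4 * ((m % (p : ℤ) : ℤ) : ℝ)) T) :
    {t : ℝ | (t : ℂ) ∈ spectrum ℂ T} = Set.Icc (-2 : ℝ) (4 * p - 2) := by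
  have hv (m : ℤ) : 4 * ((m % (p : ℤ) : ℤ) : ℝ) ∈ Set.Icc (0 : ℝ) (4 * (p - 1)) := by
    have h₀ : (0 : ℝ) ≤ (m % p : ℤ) := by exact_mod_cast Int.emod_nonneg m (by omega)
    have h₁ : ((m % p : ℤ) : ℝ) + 1 ≤ p := by exact_mod_cast Int.emod_lt_of_pos m (by omega)
    constructor <;> linarith
  ext t
  refine ⟨fun ht => ?_, fun ht => ?_⟩
  · have h := hT.spectrum_subset_Icc hv ht
    exact ⟨by linarith [h.1], by linarith [h.2]⟩
  · obtain ⟨r, hrp, hr⟩ := exists_lt_abs_sub_le hp ht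
    have hmod : ((r : ℤ) % (p : ℤ) : ℤ) = r := Int.emod_eq_of_lt (by positivity) (by omega)
    simpa [hmod] using hT.mem_spectrum r hr

end IsLayeredLaplacian

theorem example_two_sharp_general (p₁ p₂ : ℕ) (hp₂ : 3 ≤ p₂)
    (a0 a1 b0 : ℤ → ℤ → ℂ) (b1 : ℤ → ℤ → ℝ)
    (hva0 : ∀ n m : ℤ, a0 n m = 0) (hva1 : ∀ n m : ℤ, a1 n m = 1)
    (hvb0 : ∀ n m : ℤ, b0 n m = 0)
    (hvb1 : ∀ n m : ℤ, b1 n m = 4 * ((m % (p₂ : ℤ) : ℤ) : ℝ))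
    (𝒥 : H2 →L[ℂ] H2) (h𝒥 : IsJacobi2D a0 a1 b0 b1 𝒥) :
    MeasureTheory.volume {t : ℝ | (t : ℂ) ∈ spectrum ℂ 𝒥} = ENNReal.ofReal (4 * (p₂ : ℝ)) ∧
    (∀ α β : ℤ,
      4 * ∑ n ∈ Finset.range p₁, ‖b0 ((n : ℤ) + 1) β‖ +
      4 * ∑ m ∈ Finset.range p₂, ‖a1 α ((m : ℤ) + 1)‖ = 4 * (p₂ : ℝ)) := by
  have hσ := (h𝒥.isLayeredLaplacian hva0 hva1 hvb0 hvb1).real_spectrum_eq_Icc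
    (by omega : 0 < p₂)
  refine ⟨?_, fun α β => ?_⟩
  · rw [hσ, Real.volume_Icc]
    ring_nf
  · simp [hva1, hvb0]

/-- Example 2: if `a⁰ = 0`, `a¹ = 1`, `b⁰ = 0` and
`b¹_{n,m} = 4·(m mod p₂)` with `m mod p₂ ∈ {0,…,p₂−1}` (so every `Aₙ` is the identity and
every `Bₙ = diag(4m mod 4p₂)`), then `mes(σ(𝒥)) = 4p₂`, so the estimate
`mes(σ(𝒥)) ≤ 4 min_β Σ_{n=1}^{p₁}|b⁰_{n,β}| + 4 min_α Σ_{m=1}^{p₂}|a¹_{α,m}| = 4p₂`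
is attained with equality. -/
theorem example_two_sharp (p₁ p₂ : ℕ) (hp₁ : 3 ≤ p₁) (hp₂ : 3 ≤ p₂)
    (a0 a1 b0 : ℤ → ℤ → ℂ) (b1 : ℤ → ℤ → ℝ)
    (ha0 : Periodic2 p₁ p₂ a0) (ha1 : Periodic2 p₁ p₂ a1)
    (hb0 : Periodic2 p₁ p₂ b0) (hb1 : Periodic2 p₁ p₂ b1)
    (hva0 : ∀ n m : ℤ, a0 n m = 0) (hva1 : ∀ n m : ℤ, a1 n m = 1)
    (hvb0 : ∀ n m : ℤ, b0 n m = 0)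
    (hvb1 : ∀ n m : ℤ, b1 n m = 4 * ((m % (p₂ : ℤ) : ℤ) : ℝ))
    (𝒥 : H2 →L[ℂ] H2) (h𝒥 : IsJacobi2D a0 a1 b0 b1 𝒥) (hsa : IsSelfAdjoint 𝒥) :
    MeasureTheory.volume {t : ℝ | (t : ℂ) ∈ spectrum ℂ 𝒥} = ENNReal.ofReal (4 * (p₂ : ℝ)) ∧
    (∀ α β : ℤ,
      4 * ∑ n ∈ Finset.range p₁, ‖b0 ((n : ℤ) + 1) β‖ +
      4 * ∑ m ∈ Finset.range p₂, ‖a1 α ((m : ℤ) + 1)‖ = 4 * (p₂ : ℝ)) :=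
  example_two_sharp_general p₁ p₂ hp₂ a0 a1 b0 b1 hva0 hva1 hvb0 hvb1 𝒥 h𝒥
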